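/- For positive semidefinite n×n matrices A, B, a contraction Z (i.e., Z*Z ≤ I), and integer p ≥ 1, the largest eigenvalue of (A Z* B Z A)^p is at most the largest eigenvalue of A^p Z* B^p Z A^p. -/

import Mathlib

open Matrix ComplexOrder

/-- The absolute value `|M| = (Mᴴ M)^{1/2}` of a complex matrix. -/
noncomputable def matAbs {n : ℕ} (M : Matrix (Fin n) (Fin n) ℂ) : Matrix (Fin n) (Fin n) ℂ :=
  ((Matrix.posSemidef_conjTranspose_mul_self M).1.eigenvectorUnitary : Matrix (Fin n) (Fin n) ℂ) *
    Matrix.diagonal ((↑) ∘ Real.sqrt ∘ (Matrix.posSemidef_conjTranspose_mul_self M).1.eigenvalues) *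
    (star (Matrix.posSemidef_conjTranspose_mul_self M).1.eigenvectorUnitary : Matrix (Fin n) (Fin n) ℂ)

theorem matAbs_posSemidef {n : ℕ} (M : Matrix (Fin n) (Fin n) ℂ) : (matAbs M).PosSemidef :=
  by
    unfold matAbs
    rw [Matrix.star_eq_conjTranspose]
    apply Matrix.PosSemidef.mul_mul_conjTranspose_same
    rw [Matrix.posSemidef_diagonal_iff]
    intro i
    simp only [Function.comp_apply, Complex.zero_le_real]
    exact Real.sqrt_nonneg _

/-- Eigenvalues of a Hermitian matrix arranged in decreasing order:
`eigDesc hM j` is the `j`-th largest eigenvalue. -/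
noncomputable def eigDesc {n : ℕ} {M : Matrix (Fin n) (Fin n) ℂ} (hM : M.IsHermitian) :
    Fin n → ℝ :=
  fun i => hM.eigenvalues (Tuple.sort hM.eigenvalues i.rev)

/-- Eigenvalues of a Hermitian matrix arranged in increasing order. -/
noncomputable def eigAsc {n : ℕ} {M : Matrix (Fin n) (Fin n) ℂ} (hM : M.IsHermitian) :
    Fin n → ℝ :=
  fun i => hM.eigenvalues (Tuple.sort hM.eigenvalues i)

/-- The largest eigenvalue of a Hermitian matrix. -/
noncomputable def maxEig {n : ℕ} {M : Matrix (Fin n) (Fin n) ℂ} (hM : M.IsHermitian) : ℝ :=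
  ⨆ i, hM.eigenvalues i

/-- Real power `M^t` of a Hermitian matrix, via the spectral decomposition. -/
noncomputable def rpowH {n : ℕ} {M : Matrix (Fin n) (Fin n) ℂ} (hM : M.IsHermitian) (t : ℝ) :
    Matrix (Fin n) (Fin n) ℂ :=
  (hM.eigenvectorUnitary : Matrix (Fin n) (Fin n) ℂ) *
    Matrix.diagonal (fun i => ((hM.eigenvalues i ^ t : ℝ) : ℂ)) *
    star (hM.eigenvectorUnitary : Matrix (Fin n) (Fin n) ℂ)

theorem rpowH_isHermitian {n : ℕ} {M : Matrix (Fin n) (Fin n) ℂ} (hM : M.IsHermitian) (t : ℝ) :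
    (rpowH hM t).IsHermitian := by
  unfold rpowH
  unfold Matrix.IsHermitian
  simp [Matrix.conjTranspose_mul, Matrix.diagonal_conjTranspose, mul_assoc,
    Matrix.star_eq_conjTranspose]
  congr 2
  funext i
  simp [star]
  rfl

/-- The ℓ²→ℓ² operator norm of a complex matrix. -/
noncomputable def opN {n : ℕ} (M : Matrix (Fin n) (Fin n) ℂ) : ℝ :=
  ‖Matrix.toEuclideanCLM (𝕜 := ℂ) M‖

/-!
Write `b = c²` with `c = √b` and let `S k = ‖c ^ k * z * a ^ k‖`. By the C*-identity
`‖a z* b z a‖ = S 1 ^ 2` and `‖a^p z* b^p z a^p‖ = S p ^ 2`, so, as `‖x ^ p‖ ≤ ‖x‖ ^ p`, it suffices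
to show `S 1 ^ p ≤ S p`. The norm of a selfadjoint element is its spectral radius, which is
invariant under cyclic permutations of a product; this makes `S` log-convex,
`S (k+1)² ≤ S k * S (k+2)`, and with `S 0 = ‖z‖ ≤ 1` that gives `S 1 ^ p ≤ S p`. For positive
semidefinite matrices the largest eigenvalue is the operator norm.
-/

open scoped NNReal ENNReal

lemma pow_le_of_sq_le_mul {S : ℕ → ℝ} (hS : ∀ k, 0 ≤ S k) (hS0 : S 0 ≤ 1)
    (hconv : ∀ k, S (k + 1) ^ 2 ≤ S k * S (k + 2)) {k : ℕ} (hk : k ≠ 0) : S 1 ^ k ≤ S k := by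
  -- log-convexity makes the ratios `S (k + 1) / S k` increase, so each is at least `S 1 / S 0 ≥ S 1`
  have hstep : ∀ j, S 1 * S j ≤ S (j + 1) := by
    intro j
    induction j with
    | zero => simpa using mul_le_mul_of_nonneg_left hS0 (hS 1)
    | succ m ih =>
      rcases (hS (m + 1)).eq_or_lt with hm | hm
      · rw [← hm, mul_zero]
        exact hS _
      · refine le_of_mul_le_mul_right ?_ hm
        calc S 1 * S (m + 1) * S (m + 1) = S 1 * S (m + 1) ^ 2 := by ring
          _ ≤ S 1 * (S m * S (m + 2)) := mul_le_mul_of_nonneg_left (hconv m) (hS 1)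
          _ = S (m + 2) * (S 1 * S m) := by ring
          _ ≤ S (m + 2) * S (m + 1) := mul_le_mul_of_nonneg_left ih (hS _)
  induction k, Nat.one_le_iff_ne_zero.mpr hk using Nat.le_induction with
  | base => rw [pow_one]
  | succ m hm ih =>
    calc S 1 ^ (m + 1) = S 1 * S 1 ^ m := pow_succ' _ _
      _ ≤ S 1 * S m := mul_le_mul_of_nonneg_left (ih (by omega)) (hS 1)
      _ ≤ S (m + 1) := hstep m

section SpectralRadius

variable {𝕜 R : Type*} [NormedField 𝕜] [Ring R] [Algebra 𝕜 R]

lemma spectralRadius_mul_comm_le (a b : R) :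
    spectralRadius 𝕜 (a * b) ≤ spectralRadius 𝕜 (b * a) := by
  refine iSup₂_le fun k hk => ?_
  rcases eq_or_ne k 0 with rfl | hk0
  · simp
  · have hk' : k ∈ spectrum 𝕜 (b * a) \ {0} := spectrum.nonzero_mul_comm (𝕜 := 𝕜) a b ▸ ⟨hk, hk0⟩
    exact le_iSup₂ (f := fun k _ => (‖k‖₊ : ℝ≥0∞)) k hk'.1

lemma spectralRadius_mul_comm (a b : R) :
    spectralRadius 𝕜 (a * b) = spectralRadius 𝕜 (b * a) :=
  le_antisymm (spectralRadius_mul_comm_le a b) (spectralRadius_mul_comm_le (𝕜 := 𝕜) b a)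

end SpectralRadius

section CStarAlgebra

variable {A : Type*} [CStarAlgebra A]

lemma IsSelfAdjoint.norm_mul_mul_self_le {a y : A} (ha : IsSelfAdjoint a) (hy : IsSelfAdjoint y) :
    ‖a * y * a‖ ≤ ‖y * a * a‖ := by
  nontriviality A
  have hay : IsSelfAdjoint (a * y * a) := by simpa [ha.star_eq] using hy.conjugate a
  have : (‖a * y * a‖₊ : ℝ≥0∞) ≤ ‖y * a * a‖₊ :=
    calc (‖a * y * a‖₊ : ℝ≥0∞) = spectralRadius ℂ (a * (y * a)) := by
          rw [← mul_assoc, hay.spectralRadius_eq_nnnorm]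
      _ = spectralRadius ℂ (y * a * a) := spectralRadius_mul_comm _ _
      _ ≤ ‖y * a * a‖₊ := spectrum.spectralRadius_le_nnnorm _
  exact_mod_cast this

lemma norm_pow_mul_mul_pow_sq_le {a c : A} (ha : IsSelfAdjoint a) (hc : IsSelfAdjoint c)
    (z : A) (k : ℕ) :
    ‖c ^ (k + 1) * z * a ^ (k + 1)‖ ^ 2 ≤
      ‖c ^ k * z * a ^ k‖ * ‖c ^ (k + 2) * z * a ^ (k + 2)‖ := by
  set y := star (c ^ (k + 1) * z * a ^ k) * (c ^ (k + 1) * z * a ^ k)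
  have hleft : star (c ^ (k + 1) * z * a ^ (k + 1)) * (c ^ (k + 1) * z * a ^ (k + 1)) =
      a * y * a := by
    simp only [y, star_mul, star_pow, ha.star_eq, hc.star_eq]
    rw [pow_succ a k]
    nth_rewrite 1 [← (Commute.self_pow a k).eq]
    simp only [mul_assoc]
  have hright : y * a * a = star (c ^ k * z * a ^ k) * (c ^ (k + 2) * z * a ^ (k + 2)) := by
    have hc' : c ^ (k + 1) * c ^ (k + 1) = c ^ k * c ^ (k + 2) := by
      rw [← pow_add, ← pow_add]; ring_nf
    have ha' : a ^ k * a * a = a ^ (k + 2) := by rw [← pow_succ, ← pow_succ]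
    simp only [y, star_mul, star_pow, ha.star_eq, hc.star_eq]
    calc _ = a ^ k * star z * (c ^ (k + 1) * c ^ (k + 1)) * z * (a ^ k * a * a) := by
          simp only [mul_assoc]
      _ = _ := by rw [hc', ha']; simp only [mul_assoc]
  calc ‖c ^ (k + 1) * z * a ^ (k + 1)‖ ^ 2 = ‖a * y * a‖ := by
        rw [sq, ← CStarRing.norm_star_mul_self, hleft]
    _ ≤ ‖y * a * a‖ := ha.norm_mul_mul_self_le (.star_mul_self _)
    _ ≤ ‖c ^ k * z * a ^ k‖ * ‖c ^ (k + 2) * z * a ^ (k + 2)‖ := by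
        rw [hright, ← norm_star (c ^ k * z * a ^ k)]
        exact norm_mul_le _ _

lemma norm_mul_mul_pow_le {a c z : A} (ha : IsSelfAdjoint a) (hc : IsSelfAdjoint c)
    (hz : ‖z‖ ≤ 1) {k : ℕ} (hk : k ≠ 0) : ‖c * z * a‖ ^ k ≤ ‖c ^ k * z * a ^ k‖ := by
  simpa using pow_le_of_sq_le_mul (S := fun j => ‖c ^ j * z * a ^ j‖) (fun _ => norm_nonneg _)
    (by simpa using hz) (norm_pow_mul_mul_pow_sq_le ha hc z) hk

variable [PartialOrder A] [StarOrderedRing A]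

lemma norm_le_one_of_star_mul_self_le_one {z : A} (hz : star z * z ≤ 1) : ‖z‖ ≤ 1 := by
  have : ‖star z * z‖ ≤ 1 := (CStarAlgebra.norm_le_one_iff_of_nonneg _).mpr hz
  rw [CStarRing.norm_star_mul_self] at this
  nlinarith [norm_nonneg z]

lemma norm_conj_pow_le_norm_pow_conj {a b z : A} (ha : 0 ≤ a) (hb : 0 ≤ b) (hz : ‖z‖ ≤ 1)
    {p : ℕ} (hp : p ≠ 0) :
    ‖(a * star z * b * z * a) ^ p‖ ≤ ‖a ^ p * star z * b ^ p * z * a ^ p‖ := by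
  set c := CFC.sqrt b
  have hc : IsSelfAdjoint c := (CFC.sqrt_nonneg b).isSelfAdjoint
  have hsq : ∀ j, a ^ j * star z * b ^ j * z * a ^ j =
      star (c ^ j * z * a ^ j) * (c ^ j * z * a ^ j) := by
    intro j
    have hb' : b ^ j = c ^ j * c ^ j := by
      rw [← (Commute.refl c).mul_pow, CFC.sqrt_mul_sqrt_self b]
    simp only [hb', star_mul, star_pow, ha.isSelfAdjoint.star_eq, hc.star_eq, mul_assoc]
  calc ‖(a * star z * b * z * a) ^ p‖ ≤ ‖a * star z * b * z * a‖ ^ p :=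
        norm_pow_le' _ (Nat.pos_of_ne_zero hp)
    _ = (‖c * z * a‖ ^ p) ^ 2 := by
        rw [← pow_one a, ← pow_one b, hsq, CStarRing.norm_star_mul_self, pow_one, pow_one]
        ring
    _ ≤ ‖c ^ p * z * a ^ p‖ ^ 2 := by
        gcongr
        exact norm_mul_mul_pow_le ha.isSelfAdjoint hc hz hp
    _ = ‖a ^ p * star z * b ^ p * z * a ^ p‖ := by
        rw [hsq, CStarRing.norm_star_mul_self, sq]

end CStarAlgebra

open scoped Matrix.Norms.L2Operator MatrixOrder

lemma maxEig_eq_norm {n : ℕ} {M : Matrix (Fin n) (Fin n) ℂ} (hM : M.PosSemidef)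
    (h : M.IsHermitian) : maxEig h = ‖M‖ := by
  rcases isEmpty_or_nonempty (Fin n) with _ | _
  · simp [maxEig, Subsingleton.elim M 0]
  obtain ⟨i, hi⟩ : ‖M‖ ∈ Set.range h.eigenvalues :=
    h.spectrum_real_eq_range_eigenvalues ▸ CStarAlgebra.norm_mem_spectrum_of_nonneg hM.nonneg
  refine le_antisymm (ciSup_le fun j => ?_) (hi ▸ le_ciSup (Set.finite_range _).bddAbove i)
  exact (Real.le_norm_self _).trans
    (spectrum.norm_le_norm_of_mem (h.eigenvalues_mem_spectrum_real j))

theorem stmt_1 {n : ℕ} (A B Z : Matrix (Fin n) (Fin n) ℂ)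
    (hA : A.PosSemidef) (hB : B.PosSemidef) (hZ : ((1 : Matrix (Fin n) (Fin n) ℂ) - Zᴴ * Z).PosSemidef)
    (p : ℕ) (hp : 1 ≤ p)
    (h1 : ((A * Zᴴ * B * Z * A) ^ p).IsHermitian)
    (h2 : (A ^ p * Zᴴ * B ^ p * Z * A ^ p).IsHermitian) :
    maxEig h1 ≤ maxEig h2 := by
  have hM : (A * Zᴴ * B * Z * A).PosSemidef := by
    simpa [mul_assoc, hA.1.eq] using hB.conjTranspose_mul_mul_same (Z * A)
  have hMp : (A ^ p * Zᴴ * B ^ p * Z * A ^ p).PosSemidef := by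
    simpa [mul_assoc, (hA.1.pow p).eq] using (hB.pow p).conjTranspose_mul_mul_same (Z * A ^ p)
  have hZ1 : ‖Z‖ ≤ 1 := norm_le_one_of_star_mul_self_le_one (sub_nonneg.mp hZ.nonneg)
  rw [maxEig_eq_norm (hM.pow p) h1, maxEig_eq_norm hMp h2]
  exact norm_conj_pow_le_norm_pow_conj hA.nonneg hB.nonneg hZ1 (by omega : p ≠ 0)
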